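/- Let n ≥ 2 be even. On ℝ^{n−1} × ℝⁿ with coordinates (X₁,...,X_{n−1},u₁,...,uₙ) define F₁ = Σ_{i=1}^n u_i, F₂ = Σ_{i=1}^{n−1} X_i + Σ_{i=1}^n u_i²/2, and F₃ = Σ_{i=1}^{n−1} X_i(u_i + u_{i+1}) + (1/3) Σ_{i=1}^n u_i³, and let 𝔽₁₂₃ = (F₁,F₂,F₃) : ℝ^{2n−1} → ℝ³. Then rank ∇𝔽₁₂₃(X,u) ≤ 2 if and only if there exist X, u₁, u₂ ∈ ℝ such that X_i = X for all odd i, X_i = 0 for all even i, u_i = u₁ for all odd i, and u_i = u₂ for all even i (with X, u₁, u₂ arbitrary). -/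

import Mathlib

/-- The conserved quantity `F₁ = Σᵢ uᵢ` of the non-periodic Toda lattice with
`n = m + 1` particles. -/
noncomputable def todaOpenF1 (m : ℕ) (p : (Fin m → ℝ) × (Fin (m + 1) → ℝ)) : ℝ :=
  ∑ i : Fin (m + 1), p.2 i

/-- The conserved quantity `F₂ = Σᵢ Xᵢ + Σᵢ uᵢ²/2` of the non-periodic Toda
lattice with `n = m + 1` particles. -/
noncomputable def todaOpenF2 (m : ℕ) (p : (Fin m → ℝ) × (Fin (m + 1) → ℝ)) : ℝ :=
  (∑ i : Fin m, p.1 i) + ∑ i : Fin (m + 1), p.2 i ^ 2 / 2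

/-- The conserved quantity `F₃ = Σᵢ Xᵢ(uᵢ + uᵢ₊₁) + (1/3) Σᵢ uᵢ³` of the
non-periodic Toda lattice with `n = m + 1` particles. -/
noncomputable def todaOpenF3 (m : ℕ) (p : (Fin m → ℝ) × (Fin (m + 1) → ℝ)) : ℝ :=
  (∑ i : Fin m, p.1 i * (p.2 i.castSucc + p.2 i.succ))
    + (1 / 3) * ∑ i : Fin (m + 1), p.2 i ^ 3

/-- The vectorial conserved quantity `𝔽₁₂₃ = (F₁, F₂, F₃)`. -/
noncomputable def todaOpenF123 (m : ℕ)
    (p : (Fin m → ℝ) × (Fin (m + 1) → ℝ)) : ℝ × ℝ × ℝ :=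
  (todaOpenF1 m p, todaOpenF2 m p, todaOpenF3 m p)

/-! The columns of the Jacobian are `(0, 1, uᵢ + uᵢ₊₁)` in the `Xᵢ`-slots and
`(1, uₖ, Xₖ₋₁ + Xₖ + uₖ²)` in the `uₖ`-slots. Two of them are always independent and span a plane
of the form `z = a x + s y`, so the rank is at most `2` iff every column lies on such a plane, i.e.
iff `uᵢ + uᵢ₊₁ = s` for all `i` and `Xₖ₋₁ + Xₖ = a + s uₖ - uₖ²` for all `k`. The first condition
makes `u` alternate between two values `u₁, u₂` with `u₁ + u₂ = s`, so the right-hand side of the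
second is the constant `a + u₁ u₂`. A constant sum over neighbouring bonds forces
`X = (X, 0, X, 0, …)`, and this pattern is compatible with the last site exactly when the number
of particles is even. -/

theorem sq_eq_of_eq_ite {R : Type*} [CommRing R] {p : Prop} [Decidable p] {x a b : R}
    (h : x = if p then a else b) : x ^ 2 = (a + b) * x - a * b := by
  split_ifs at h <;> subst h <;> ring

section Parity
variable {G : Type*} [AddCommGroup G]

theorem forall_eq_ite_even_iff {n : ℕ} (f : Fin (n + 1) → G) (a b : G) :
    (∀ k, f k = if Even (k : ℕ) then a else b) ↔
      f 0 = a ∧ ∀ i : Fin n, f i.castSucc + f i.succ = a + b := by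
  constructor
  · intro h
    refine ⟨by simpa using h 0, fun i => ?_⟩
    rw [h, h]
    simp only [Fin.val_castSucc, Fin.val_succ, Nat.even_add_one]
    split_ifs <;> abel
  · rintro ⟨h0, hstep⟩ k
    induction k using Fin.induction with
    | zero => simpa using h0
    | succ i ih =>
      rw [eq_sub_of_add_eq' (hstep i), ih]
      simp only [Fin.val_castSucc, Fin.val_succ, Nat.even_add_one]
      split_ifs <;> abel

variable {m : ℕ}

-- `bondSum X k = X (k - 1) + X k`, where the missing bonds `X (-1)` and `X m` count as `0`.
def bondSum (X : Fin m → G) : Fin (m + 1) → G :=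
  Fin.snoc X 0 + Fin.cons 0 X

theorem sum_bondSum_mul {R : Type*} [CommRing R] (X : Fin m → R) (w : Fin (m + 1) → R) :
    ∑ k, bondSum X k * w k = ∑ i, X i * (w i.castSucc + w i.succ) := by
  simp only [bondSum, Pi.add_apply, add_mul, Finset.sum_add_distrib, mul_add]
  congr 1
  · simp [Fin.sum_univ_castSucc]
  · simp [Fin.sum_univ_succ]

theorem bondSum_zero {n : ℕ} (X : Fin (n + 1) → G) : bondSum X 0 = X 0 := by
  rw [bondSum, Pi.add_apply, ← Fin.castSucc_zero, Fin.snoc_castSucc, Fin.castSucc_zero,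
    Fin.cons_zero, add_zero]

theorem bondSum_last {n : ℕ} (X : Fin (n + 1) → G) :
    bondSum X (Fin.last (n + 1)) = X (Fin.last n) := by
  rw [bondSum, Pi.add_apply, Fin.snoc_last, ← Fin.succ_last, Fin.cons_succ, zero_add]

theorem bondSum_succ_castSucc {n : ℕ} (X : Fin (n + 1) → G) (i : Fin n) :
    bondSum X i.succ.castSucc = X i.castSucc + X i.succ := by
  rw [bondSum, Pi.add_apply, Fin.snoc_castSucc, ← Fin.succ_castSucc, Fin.cons_succ, add_comm]

theorem forall_bondSum_eq_iff {n : ℕ} (X : Fin (n + 1) → G) (c : G) :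
    (∀ k, bondSum X k = c) ↔
      X 0 = c ∧ (∀ i : Fin n, X i.castSucc + X i.succ = c) ∧ X (Fin.last n) = c := by
  constructor
  · intro h
    refine ⟨?_, fun i => ?_, ?_⟩
    · rw [← bondSum_zero X]; exact h 0
    · rw [← bondSum_succ_castSucc X]; exact h _
    · rw [← bondSum_last X]; exact h _
  · rintro ⟨h0, hstep, hlast⟩ k
    induction k using Fin.lastCases with
    | last => rw [bondSum_last, hlast]
    | cast j =>
      induction j using Fin.cases with
      | zero => rw [Fin.castSucc_zero, bondSum_zero, h0]
      | succ i => rw [bondSum_succ_castSucc, hstep]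

theorem forall_bondSum_eq_iff_of_even {n : ℕ} (hn : Even n)
    (X : Fin (n + 1) → G) (c : G) :
    (∀ k, bondSum X k = c) ↔ ∀ i, X i = if Even (i : ℕ) then c else 0 := by
  rw [forall_bondSum_eq_iff, forall_eq_ite_even_iff, add_zero]
  refine ⟨fun h => ⟨h.1, h.2.1⟩, fun ⟨h0, hstep⟩ => ⟨h0, hstep, ?_⟩⟩
  have := (forall_eq_ite_even_iff X c 0).2 ⟨h0, by simpa using hstep⟩ (Fin.last n)
  simpa [hn] using this

end Parity

section PlaneForm
variable {K : Type*} [Field K]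

def planeForm (a s : K) : K × K × K →ₗ[K] K :=
  LinearMap.snd K K K ∘ₗ LinearMap.snd K K (K × K) - a • LinearMap.fst K K (K × K)
    - s • (LinearMap.fst K K K ∘ₗ LinearMap.snd K K (K × K))

@[simp]
theorem planeForm_apply (a s : K) (p : K × K × K) :
    planeForm a s p = p.2.2 - a * p.1 - s * p.2.1 := rfl

theorem finrank_ker_planeForm (a s : K) :
    Module.finrank K (LinearMap.ker (planeForm a s)) = 2 := by
  have hsurj : LinearMap.range (planeForm a s) = ⊤ :=
    LinearMap.range_eq_top.mpr fun t => ⟨(0, 0, t), by simp⟩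
  have := LinearMap.finrank_range_add_finrank_ker (planeForm a s)
  rw [hsurj, finrank_top, Module.finrank_self] at this
  simp only [Module.finrank_prod, Module.finrank_self] at this
  omega

theorem ker_planeForm_le {P : Submodule K (K × K × K)} {s y z : K}
    (h₁ : (0, 1, s) ∈ P) (h₂ : (1, y, z) ∈ P) : LinearMap.ker (planeForm (z - s * y) s) ≤ P := by
  intro q hq
  have hq : q.2.2 = (z - s * y) * q.1 + s * q.2.1 := by
    rw [LinearMap.mem_ker, planeForm_apply] at hq; linear_combination hq
  have : q = q.1 • ((1 : K), y, z) + (q.2.1 - q.1 * y) • ((0 : K), (1 : K), s) := by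
    ext <;> simp [hq]; ring
  rw [this]
  exact P.add_mem (P.smul_mem _ h₂) (P.smul_mem _ h₁)

theorem finrank_le_two_iff_exists_le_ker_planeForm {P : Submodule K (K × K × K)} {s y z : K}
    (h₁ : (0, 1, s) ∈ P) (h₂ : (1, y, z) ∈ P) :
    Module.finrank K P ≤ 2 ↔ ∃ a s, P ≤ LinearMap.ker (planeForm a s) := by
  constructor
  · intro hP
    refine ⟨z - s * y, s, (Submodule.eq_of_le_of_finrank_le (ker_planeForm_le h₁ h₂) ?_).ge⟩
    rwa [finrank_ker_planeForm]
  · rintro ⟨a, s, hle⟩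
    exact (Submodule.finrank_mono hle).trans (finrank_ker_planeForm a s).le

end PlaneForm

section Jacobian
variable {m : ℕ} (X : Fin m → ℝ) (u : Fin (m + 1) → ℝ)

theorem fderiv_todaOpenF123_apply (v : (Fin m → ℝ) × (Fin (m + 1) → ℝ)) :
    fderiv ℝ (todaOpenF123 m) (X, u) v =
      (∑ k, v.2 k, ∑ i, v.1 i + ∑ k, u k * v.2 k,
        ∑ i, (u i.castSucc + u i.succ) * v.1 i + ∑ k, (bondSum X k + u k ^ 2) * v.2 k) := by
  have hX (i : Fin m) :=
    (hasFDerivAt_apply i X).comp (X, u) (hasFDerivAt_fst (𝕜 := ℝ) (p := (X, u)))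
  have hu (k : Fin (m + 1)) :=
    (hasFDerivAt_apply k u).comp (X, u) (hasFDerivAt_snd (𝕜 := ℝ) (p := (X, u)))
  have h : HasFDerivAt (todaOpenF123 m) _ (X, u) :=
    (HasFDerivAt.fun_sum fun k _ => hu k).prodMk
      (((HasFDerivAt.fun_sum fun i _ => hX i).add
        (HasFDerivAt.fun_sum fun k _ => ((hu k).pow 2).mul_const 2⁻¹)).prodMk
      ((HasFDerivAt.fun_sum fun i _ => (hX i).mul ((hu i.castSucc).add (hu i.succ))).add
        ((HasFDerivAt.fun_sum fun k _ => (hu k).pow 3).const_mul (1 / 3))))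
  rw [h.fderiv]
  simp only [ContinuousLinearMap.prod_apply, FunLike.coe_sum, Finset.sum_apply,
    add_apply, smul_apply, ContinuousLinearMap.comp_apply,
    ContinuousLinearMap.proj_apply, ContinuousLinearMap.coe_fst', ContinuousLinearMap.coe_snd',
    Function.comp_apply, Pi.add_apply, smul_eq_mul, nsmul_eq_mul, Prod.mk.injEq, true_and]
  refine ⟨congrArg _ (Finset.sum_congr rfl fun k _ => by ring), ?_⟩
  simp only [add_mul, mul_add, Finset.sum_add_distrib, sum_bondSum_mul, Finset.mul_sum]
  rw [Finset.sum_congr rfl fun k _ =>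
    (by ring : 1 / 3 * ((3 : ℕ) * u k ^ (3 - 1) * v.2 k) = u k ^ 2 * v.2 k)]
  ring

theorem fderiv_todaOpenF123_single_fst (i : Fin m) :
    fderiv ℝ (todaOpenF123 m) (X, u) (Pi.single i 1, 0) = (0, 1, u i.castSucc + u i.succ) := by
  simp [fderiv_todaOpenF123_apply, Pi.single_apply]

theorem fderiv_todaOpenF123_single_snd (k : Fin (m + 1)) :
    fderiv ℝ (todaOpenF123 m) (X, u) (0, Pi.single k 1) = (1, u k, bondSum X k + u k ^ 2) := by
  simp [fderiv_todaOpenF123_apply, Pi.single_apply]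

theorem range_fderiv_todaOpenF123_le_ker_planeForm_iff (a s : ℝ) :
    LinearMap.range (fderiv ℝ (todaOpenF123 m) (X, u) :
        (Fin m → ℝ) × (Fin (m + 1) → ℝ) →ₗ[ℝ] ℝ × ℝ × ℝ) ≤ LinearMap.ker (planeForm a s) ↔
      (∀ i : Fin _, u i.castSucc + u i.succ = s) ∧ ∀ k, bondSum X k + u k ^ 2 = a + s * u k := by
  constructor
  · intro h
    have hv (v) : planeForm a s (fderiv ℝ (todaOpenF123 m) (X, u) v) = 0 :=
      h (LinearMap.mem_range_self _ v)
    refine ⟨fun i => ?_, fun k => ?_⟩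
    · have := hv (Pi.single i 1, 0)
      rw [fderiv_todaOpenF123_single_fst, planeForm_apply] at this
      linear_combination this
    · have := hv (0, Pi.single k 1)
      rw [fderiv_todaOpenF123_single_snd, planeForm_apply] at this
      linear_combination this
  · rintro ⟨hs, hA⟩ _ ⟨v, rfl⟩
    rw [LinearMap.mem_ker, ContinuousLinearMap.coe_coe, fderiv_todaOpenF123_apply, planeForm_apply]
    simp only [hs, hA]
    simp only [add_mul, mul_assoc, Finset.sum_add_distrib, ← Finset.mul_sum]
    ring

end Jacobian

theorem exists_coplanar_columns_iff_alternating {n : ℕ} (hn : Even n) (X : Fin (n + 1) → ℝ)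
    (u : Fin (n + 2) → ℝ) :
    (∃ a s, (∀ i : Fin _, u i.castSucc + u i.succ = s) ∧
        ∀ k, bondSum X k + u k ^ 2 = a + s * u k) ↔
      ∃ Xc u₁ u₂, (∀ i, X i = if Even (i : ℕ) then Xc else 0) ∧
        ∀ k, u k = if Even (k : ℕ) then u₁ else u₂ := by
  constructor
  · rintro ⟨a, s, hs, hA⟩
    have hu : ∀ k, u k = if Even (k : ℕ) then u 0 else s - u 0 :=
      (forall_eq_ite_even_iff u _ _).2 ⟨rfl, fun i => by rw [hs]; abel⟩
    refine ⟨a + u 0 * (s - u 0), u 0, s - u 0,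
      (forall_bondSum_eq_iff_of_even hn X _).1 fun k => ?_, hu⟩
    linear_combination hA k - sq_eq_of_eq_ite (hu k)
  · rintro ⟨Xc, u₁, u₂, hX, hu⟩
    refine ⟨Xc - u₁ * u₂, u₁ + u₂, ((forall_eq_ite_even_iff u u₁ u₂).1 hu).2, fun k => ?_⟩
    rw [(forall_bondSum_eq_iff_of_even hn X Xc).2 hX k, sq_eq_of_eq_ite (hu k)]
    ring

/-- For the non-periodic Toda lattice with an even number `n = m + 1 ≥ 2` of
particles, the Jacobian of `𝔽₁₂₃ = (F₁, F₂, F₃)` has rank at most `2` exactly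
at the configurations `(X,0,…,X,0,X,u₁,u₂,…,u₁,u₂)` with `X, u₁, u₂`
arbitrary. -/
theorem todaOpen_F123_rank_le_two_iff_even
    (m : ℕ) (heven : Even (m + 1)) (X : Fin m → ℝ) (u : Fin (m + 1) → ℝ) :
    Module.finrank ℝ (LinearMap.range (fderiv ℝ (todaOpenF123 m) (X, u) : (Fin m → ℝ) × (Fin (m + 1) → ℝ) →ₗ[ℝ] ℝ × ℝ × ℝ)) ≤ 2 ↔
      ∃ Xc u₁ u₂ : ℝ,
        (∀ i : Fin m, X i = if i.val % 2 = 0 then Xc else 0) ∧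
        (∀ i : Fin (m + 1), u i = if i.val % 2 = 0 then u₁ else u₂) := by
  obtain ⟨n, rfl⟩ : ∃ n, m = n + 1 := ⟨m - 1, by obtain ⟨r, hr⟩ := heven; omega⟩
  have hn : Even n := by simpa [Nat.even_add_one] using heven
  rw [finrank_le_two_iff_exists_le_ker_planeForm
    (LinearMap.mem_range.2 ⟨_, fderiv_todaOpenF123_single_fst X u 0⟩)
    (LinearMap.mem_range.2 ⟨_, fderiv_todaOpenF123_single_snd X u 0⟩)]
  simp only [range_fderiv_todaOpenF123_le_ker_planeForm_iff,
    exists_coplanar_columns_iff_alternating hn, Nat.even_iff]
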